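/- Let n be a natural number and let f : ℝⁿ → ℝ be a convex function. Let σ_1, …, σ_m be finitely many subsets of ℝⁿ whose union is all of ℝⁿ and each of which has nonempty topological interior, and let L_1, …, L_m : ℝⁿ → ℝ be affine functions such that f(x) = L_i(x) for all x ∈ σ_i and each i. Then f(x) = max_{1 ≤ i ≤ m} L_i(x) for every x ∈ ℝⁿ. -/

import Mathlib

/-!
Every piece `L i` lies below `f`: the convex function `f - L i` vanishes on a neighbourhood
of an interior point of `σ i`, so that point is a local, hence a global, minimum, with value `0`.
Conversely, at each point `f` equals some piece because the `σ i` cover.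
-/

open Set Filter

theorem AffineMap.concaveOn {E : Type*} [AddCommGroup E] [Module ℝ E] (L : E →ᵃ[ℝ] ℝ)
    {s : Set E} (hs : Convex ℝ s) : ConcaveOn ℝ s L :=
  ⟨hs, fun _ _ _ _ _ _ _ _ hab => (Convex.combo_affine_apply hab).ge⟩

theorem ConvexOn.affineMap_le_of_eqOn {E : Type*} [AddCommGroup E] [TopologicalSpace E]
    [Module ℝ E] [IsTopologicalAddGroup E] [ContinuousSMul ℝ E] {f : E → ℝ} {s t : Set E}
    (hf : ConvexOn ℝ s f) (hts : t ⊆ s) (ht : (interior t).Nonempty) {L : E →ᵃ[ℝ] ℝ}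
    (hL : EqOn f L t) {x : E} (hx : x ∈ s) : L x ≤ f x := by
  obtain ⟨a, ha⟩ := ht
  have hLa : f a = L a := hL (interior_subset ha)
  have hmin : IsLocalMinOn (f - ⇑L) s a := by
    filter_upwards [nhdsWithin_le_nhds (mem_interior_iff_mem_nhds.mp ha)] with y hy
    simp [hL hy, hLa]
  have hmin' := IsMinOn.of_isLocalMinOn_of_convexOn (hts (interior_subset ha)) hmin
    (hf.sub (L.concaveOn hf.1)) hx
  simp only [Pi.sub_apply, hLa, sub_self, sub_nonneg] at hmin'
  exact hmin'

/-- **Proposition 5.4 of the paper.** A convex function `f : ℝⁿ → ℝ`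
which is facewise affine with respect to a finite cover of `ℝⁿ` by sets with nonempty
interior equals the maximum of its affine pieces. -/
theorem convexOn_eq_max_of_facewise_affine
    (n m : ℕ) (hm : 0 < m) (f : (Fin n → ℝ) → ℝ)
    (hf : ConvexOn ℝ Set.univ f)
    (σ : Fin m → Set (Fin n → ℝ))
    (hcover : (⋃ i, σ i) = (Set.univ : Set (Fin n → ℝ)))
    (hint : ∀ i, (interior (σ i)).Nonempty)
    (L : Fin m → ((Fin n → ℝ) →ᵃ[ℝ] ℝ))
    (hL : ∀ i, ∀ x ∈ σ i, f x = L i x) :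
    ∀ x : Fin n → ℝ,
      f x = Finset.univ.sup'
        (Finset.univ_nonempty_iff.mpr (Fin.pos_iff_nonempty.mp hm))
        (fun i => L i x) := by
  intro x
  obtain ⟨i, hi⟩ := mem_iUnion.mp (hcover ▸ mem_univ x)
  refine le_antisymm ((hL i x hi).trans_le (Finset.le_sup' (fun j => L j x) (Finset.mem_univ i)))
    (Finset.sup'_le _ _ fun j _ => ?_)
  exact hf.affineMap_le_of_eqOn (subset_univ _) (hint j) (hL j) (mem_univ x)
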